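/- arXiv:1201.6376 — 4 statements merged into one kernel-verified Lean document; each statement's English description precedes it below -/
import Mathlib

section
/- Let s, x, y be vertices in a finite chordal graph such that [sxy]. If the line determined by s and x equals the line determined by s and y, then x is a cut vertex separating s and y, i.e., every path from s to y passes through x. -/
/-- `b` lies between `a` and `c` in the metric space induced by a graph `G`. -/
def SimpleGraph.Btw {V : Type*} (G : SimpleGraph V) (a b c : V) : Prop :=
  a ≠ b ∧ b ≠ c ∧ a ≠ c ∧ G.dist a b + G.dist b c = G.dist a c

/-- The line determined by two distinct vertices `u` and `v`. -/
def SimpleGraph.line {V : Type*} (G : SimpleGraph V) (u v : V) : Set V :=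
  {u, v} ∪ {p | G.Btw p u v ∨ G.Btw u p v ∨ G.Btw u v p}

/-- A graph is chordal if every cycle of length at least four has a chord;
equivalently, it contains no induced cycle of length at least four. -/
def SimpleGraph.IsChordal {V : Type*} (G : SimpleGraph V) : Prop :=
  ∀ n : ℕ, 4 ≤ n → IsEmpty (SimpleGraph.cycleGraph n ↪g G)

/-!
Put `a = d(s, x)` and `b = d(x, y)`. Equality of the lines `sx` and `sy` forbids a neighbour `z`
of `x` with `d(z, y) = b`: such a `z` has `d(s, z) = a`, which puts it on `sy` but not on `sx`, or
`d(s, z) = a + 1`, which puts it on `sx` but not on `sy`.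

A path from `s` to `y` avoiding `x` connects, in `G - x`, a neighbour of `x` on a geodesic towards
`s` (at distance at least `b + 1` from `y`) to a neighbour of `x` on a geodesic towards `y` (at
distance `b - 1`). In a chordal graph such neighbours are connected inside the neighbourhood of `x`:
a shortest path between them in `G - x` with no interior neighbour of `x` would close up through
`x` into an induced cycle of length at least four. Along a walk in the neighbourhood, `d(·, y)`
changes by at most one per step and never takes the value `b`, so it cannot pass from above `b` to
below `b`.
-/

namespace SimpleGraph

variable {V : Type*} {G : SimpleGraph V}

theorem cycleGraph_adj_iff_val {n : ℕ} {u v : Fin (n + 2)} :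
    (cycleGraph (n + 2)).Adj u v ↔ u.val + 1 = v.val ∨ v.val + 1 = u.val ∨
      (u.val = 0 ∧ v.val = n + 1) ∨ (v.val = 0 ∧ u.val = n + 1) := by
  have := u.isLt
  have := v.isLt
  rw [cycleGraph_adj']
  rcases lt_trichotomy u v with h | rfl | h
  · rw [Fin.coe_sub_iff_lt.2 h, Fin.coe_sub_iff_le.2 h.le]
    omega
  · simp only [sub_self, Fin.val_zero]
    omega
  · rw [Fin.coe_sub_iff_le.2 h.le, Fin.coe_sub_iff_lt.2 h]
    omega

theorem IsChordal.exists_interior_adj_of_induced_path (hG : G.IsChordal) {n : ℕ} (hn : 2 ≤ n)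
    {g : ℕ → V} {x : V} (hg : Set.InjOn g (Set.Iic n)) (hx : ∀ i ≤ n, g i ≠ x)
    (hadj : ∀ i ≤ n, ∀ j ≤ n, G.Adj (g i) (g j) → i + 1 = j ∨ j + 1 = i)
    (hsucc : ∀ i < n, G.Adj (g i) (g (i + 1))) (hfirst : G.Adj x (g 0))
    (hlast : G.Adj x (g n)) : ∃ i, 0 < i ∧ i < n ∧ G.Adj x (g i) := by
  by_contra! hinterior
  have hapex (i : ℕ) (hi : i ≤ n) : G.Adj x (g i) ↔ i = 0 ∨ i = n := by
    refine ⟨fun h => ?_, ?_⟩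
    · by_contra!
      exact hinterior i (by omega) (by omega) h
    · rintro (rfl | rfl) <;> assumption
  have hpath (i : ℕ) (hi : i ≤ n) (j : ℕ) (hj : j ≤ n) :
      G.Adj (g i) (g j) ↔ i + 1 = j ∨ j + 1 = i := by
    refine ⟨hadj i hi j hj, ?_⟩
    rintro (rfl | rfl)
    exacts [hsucc i (by omega), (hsucc j (by omega)).symm]
  -- the cycle `g 0, …, g n, x` is induced and has length `n + 2 ≥ 4`
  let f : Fin (n + 2) → V := fun k => if k.val ≤ n then g k else x
  have hf : Function.Injective f := by
    intro u v huv
    have := u.isLt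
    have := v.isLt
    simp only [f] at huv
    split_ifs at huv with hu hv hv
    · exact Fin.ext (hg hu hv huv)
    · exact absurd huv (hx u hu)
    · exact absurd huv.symm (hx v hv)
    · exact Fin.ext (by omega)
  refine (hG (n + 2) (by omega)).false ⟨⟨f, hf⟩, fun {u v} => ?_⟩
  have := u.isLt
  have := v.isLt
  rw [cycleGraph_adj_iff_val]
  simp only [f, Function.Embedding.coeFn_mk]
  split_ifs with hu hv hv
  · rw [hpath u hu v hv]; omega
  · rw [G.adj_comm, hapex u hu]; omega
  · rw [hapex v hv]; omega
  · simp only [SimpleGraph.irrefl, false_iff]; omega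

namespace Walk

theorem dist_getVert_getVert {u v : V} (p : G.Walk u v) (hp : p.length = G.dist u v)
    {i j : ℕ} (hij : i ≤ j) (hj : j ≤ p.length) :
    G.dist (p.getVert i) (p.getVert j) = j - i := by
  have h := length_eq_dist_of_subwalk hp
    (((p.drop i).isSubwalk_take (j - i)).trans (p.isSubwalk_drop i))
  rw [take_length, drop_length, drop_getVert, Nat.add_sub_cancel' hij] at h
  omega

theorem add_one_eq_or_of_adj_getVert {u v : V} (p : G.Walk u v) (hp : p.length = G.dist u v)
    {i j : ℕ} (hi : i ≤ p.length) (hj : j ≤ p.length)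
    (h : G.Adj (p.getVert i) (p.getVert j)) : i + 1 = j ∨ j + 1 = i := by
  rcases le_total i j with hij | hji
  · have := p.dist_getVert_getVert hp hij hj
    rw [dist_eq_one_iff_adj.2 h] at this
    omega
  · have := p.dist_getVert_getVert hp hji hi
    rw [dist_eq_one_iff_adj.2 h.symm] at this
    omega

theorem dist_lt_iff_of_forall_ne {u w : V} (y : V) {m : ℕ} (q : G.Walk u w)
    (hq : ∀ v ∈ q.support, G.dist v y ≠ m) : G.dist u y < m ↔ G.dist w y < m := by
  induction q with
  | nil => rfl
  | @cons u v w h q ih =>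
    have hu := hq u (start_mem_support _)
    have hv := hq v (by simp)
    have hstep := h.diff_dist_adj (u := y)
    rw [G.dist_comm (u := y), G.dist_comm (u := y)] at hstep
    rw [← ih fun v' hv' => hq v' (by simp [hv'])]
    omega

end Walk

theorem Reachable.exists_adj_dist_add_one_eq {x t : V} (h : G.Reachable x t) (hne : x ≠ t) :
    ∃ w, G.Adj x w ∧ G.dist w t + 1 = G.dist x t ∧ ∃ q : G.Walk w t, x ∉ q.support := by
  obtain ⟨p, hpath, hp⟩ := h.exists_path_of_dist
  cases p with
  | nil => exact absurd rfl hne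
  | cons hadj q =>
    have hq := dist_le q
    have htri := q.reachable.dist_triangle_right x
    rw [dist_eq_one_iff_adj.2 hadj] at htri
    rw [Walk.length_cons] at hp
    exact ⟨_, hadj, by omega, q, ((Walk.cons_isPath_iff _ _).1 hpath).2⟩

theorem IsChordal.exists_walk_forall_adj_of_reachable (hG : G.IsChordal) {x : V}
    {a b : ({x}ᶜ : Set V)} (hab : (G.induce {x}ᶜ).Reachable a b) (ha : G.Adj x a)
    (hb : G.Adj x b) : ∃ r : G.Walk a b, ∀ v ∈ r.support, G.Adj x v := by
  induction hd : (G.induce {x}ᶜ).dist a b using Nat.strong_induction_on generalizing a b with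
  | _ n ih =>
  obtain ⟨p, hpath, hp⟩ := hab.exists_path_of_dist
  have hlen : p.length = n := hp.trans hd
  by_cases hsplit : ∃ i, 0 < i ∧ i < n ∧ G.Adj x (p.getVert i)
  · obtain ⟨i, hi0, hin, hxi⟩ := hsplit
    have htake := dist_le (p.take i)
    have hdrop := dist_le (p.drop i)
    rw [Walk.take_length] at htake
    rw [Walk.drop_length] at hdrop
    obtain ⟨r₁, hr₁⟩ := ih _ (by omega) (p.take i).reachable ha hxi rfl
    obtain ⟨r₂, hr₂⟩ := ih _ (by omega) (p.drop i).reachable hxi hb rfl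
    refine ⟨r₁.append r₂, fun v hv => ?_⟩
    rcases (Walk.mem_support_append_iff _ _).1 hv with hv | hv
    exacts [hr₁ v hv, hr₂ v hv]
  push Not at hsplit
  by_cases hn : 2 ≤ n
  · obtain ⟨i, hi0, hin, hxi⟩ := hG.exists_interior_adj_of_induced_path hn
      (g := fun i => (p.getVert i).val)
      (Subtype.val_injective.comp_injOn (hlen ▸ hpath.getVert_injOn))
      (fun i _ => (p.getVert i).prop)
      (fun i hi j hj h => p.add_one_eq_or_of_adj_getVert hp (by omega) (by omega) h)
      (fun i hi => p.adj_getVert_succ (by omega)) (by simpa using ha)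
      (by simpa [← hlen] using hb)
    exact absurd hxi (hsplit i hi0 hin)
  refine ⟨p.map (Embedding.induce _).toHom, fun v hv => ?_⟩
  replace hv : v ∈ p.support.map (↑) := by
    convert hv using 1
    exact (Walk.support_map (Embedding.induce {x}ᶜ).toHom p).symm
  obtain ⟨w, hw, rfl⟩ := List.mem_map.1 hv
  obtain ⟨i, rfl, hi⟩ := Walk.mem_support_iff_exists_getVert.1 hw
  obtain rfl | rfl : i = 0 ∨ i = n := by omega
  · simpa using ha
  · simpa [← hlen] using hb

theorem IsChordal.exists_walk_forall_adj (hG : G.IsChordal) {x a b : V} (ha : G.Adj x a)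
    (hb : G.Adj x b) (q : G.Walk a b) (hq : x ∉ q.support) :
    ∃ r : G.Walk a b, ∀ v ∈ r.support, G.Adj x v :=
  have hqx : ∀ v ∈ q.support, v ∈ ({x}ᶜ : Set V) := fun _ hv =>
    Set.mem_compl_singleton_iff.2 (ne_of_mem_of_not_mem hv hq)
  hG.exists_walk_forall_adj_of_reachable (q.induce {x}ᶜ hqx).reachable ha hb

theorem mem_line_iff {u v z : V} :
    z ∈ G.line u v ↔ z = u ∨ z = v ∨ G.Btw z u v ∨ G.Btw u z v ∨ G.Btw u v z := by
  simp only [line, Set.mem_union, Set.mem_insert_iff, Set.mem_singleton_iff, Set.mem_ofPred_eq,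
    or_assoc]

theorem Btw.reachable {a b c : V} (h : G.Btw a b c) (hac : G.Reachable a c) :
    G.Reachable a b ∧ G.Reachable b c := by
  obtain ⟨-, -, hne, hsum⟩ := h
  have := hac.pos_dist_of_ne hne
  by_cases hab : G.Reachable a b
  · exact ⟨hab, hab.symm.trans hac⟩
  · have := dist_eq_zero_of_not_reachable hab
    exact absurd (hac.trans (Reachable.of_dist_ne_zero (by omega)).symm) hab

theorem dist_ne_of_adj_of_line_eq {s x y z : V} (hsxy : G.Btw s x y)
    (hline : G.line s x = G.line s y) (hrsy : G.Reachable s y) (hz : G.Adj x z) :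
    G.dist z y ≠ G.dist x y := by
  intro hzy
  obtain ⟨hrsx, hrxy⟩ := hsxy.reachable hrsy
  obtain ⟨hsx, hxy, hsy, hsum⟩ := hsxy
  have ha := hrsx.pos_dist_of_ne hsx
  have hb := hrxy.pos_dist_of_ne hxy
  have hxz := dist_eq_one_iff_adj.2 hz
  have hzx := dist_eq_one_iff_adj.2 hz.symm
  have hzs := G.dist_comm (u := z) (v := s)
  have hyz := G.dist_comm (u := y) (v := z)
  have hlow := (hrsx.trans hz.reachable).dist_triangle_left y
  have hup := hz.reachable.dist_triangle_right s
  have hzs' : z ≠ s := by rintro rfl; simp only [dist_self] at hlow; omega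
  have hzy' : z ≠ y := by rintro rfl; simp only [dist_self] at hzy; omega
  rcases (by omega : G.dist s z = G.dist s x ∨ G.dist s z = G.dist s x + 1) with h | h
  · have hmem : z ∈ G.line s y := mem_line_iff.2 <| .inr <| .inr <| .inr <| .inl
      ⟨hzs'.symm, hzy', hsy, by omega⟩
    rw [← hline, mem_line_iff] at hmem
    rcases hmem with rfl | rfl | ⟨-, -, -, h'⟩ | ⟨-, -, -, h'⟩ | ⟨-, -, -, h'⟩
    · exact hzs' rfl
    · exact G.irrefl hz
    all_goals omega
  · have hmem : z ∈ G.line s x := mem_line_iff.2 <| .inr <| .inr <| .inr <| .inr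
      ⟨hsx, hz.ne, hzs'.symm, by omega⟩
    rw [hline, mem_line_iff] at hmem
    rcases hmem with rfl | rfl | ⟨-, -, -, h'⟩ | ⟨-, -, -, h'⟩ | ⟨-, -, -, h'⟩
    · exact hzs' rfl
    · exact hzy' rfl
    all_goals omega

end SimpleGraph

theorem stmt1_general {V : Type*} (G : SimpleGraph V) (hG : G.IsChordal)
    (s x y : V) (hsxy : G.Btw s x y) (hline : G.line s x = G.line s y) :
    ∀ p : G.Walk s y, p.IsPath → x ∈ p.support := by
  intro p _
  by_contra hx
  have ⟨hsx, hxy, _, hsum⟩ := hsxy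
  obtain ⟨hrsx, hrxy⟩ := hsxy.reachable p.reachable
  obtain ⟨w₁, hxw₁, hdw₁, q₁, hq₁⟩ := hrsx.symm.exists_adj_dist_add_one_eq hsx.symm
  obtain ⟨w₂, hxw₂, hdw₂, q₂, hq₂⟩ := hrxy.exists_adj_dist_add_one_eq hxy
  obtain ⟨r, hr⟩ := hG.exists_walk_forall_adj hxw₁ hxw₂ (q₁.append (p.append q₂.reverse))
      (by simp [SimpleGraph.Walk.mem_support_append_iff, hq₁, hx, hq₂])
  have hcross := r.dist_lt_iff_of_forall_ne y fun v hv =>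
    SimpleGraph.dist_ne_of_adj_of_line_eq hsxy hline p.reachable (hr v hv)
  have htri := q₁.reverse.reachable.dist_triangle_left y
  rw [G.dist_comm (u := x), G.dist_comm (u := w₁)] at hdw₁
  omega

/-- Lemma 1: in a finite chordal graph, if `[sxy]` and the lines `sx` and `sy`
coincide, then `x` is a cut vertex separating `s` and `y`: every path from
`s` to `y` passes through `x`. -/
theorem stmt1 {V : Type*} [Fintype V] (G : SimpleGraph V) (hG : G.IsChordal)
    (s x y : V) (hsxy : G.Btw s x y) (hline : G.line s x = G.line s y) :
    ∀ p : G.Walk s y, p.IsPath → x ∈ p.support :=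
  stmt1_general G hG s x y hsxy hline
end

section
/- In a finite connected graph on at least two vertices, if a vertex s has exactly one neighbour u, then the line determined by s and u consists of all vertices of the graph. -/
/-- In a finite connected graph on at least two vertices, if a vertex `s` has
exactly one neighbour `u`, then the line determined by `s` and `u` consists of
all vertices of the graph. -/
theorem stmt4 {V : Type*} [Fintype V] (G : SimpleGraph V) (hconn : G.Connected)
    (h2 : 2 ≤ Fintype.card V) (s u : V) (hnbr : G.neighborSet s = {u}) :
    G.line s u = Set.univ := by
  have hadj : G.Adj s u := by
    have : u ∈ G.neighborSet s := by rw [hnbr]; rfl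
    exact this
  have hsu : s ≠ u := G.ne_of_adj hadj
  have hdsu : G.dist s u = 1 := by
    rw [SimpleGraph.dist_eq_one_iff_adj]; exact hadj
  ext p
  simp only [Set.mem_univ, iff_true]
  by_cases hps : p = s
  · exact Or.inl (Or.inl hps)
  by_cases hpu : p = u
  · exact Or.inl (Or.inr hpu)
  -- show dist s p = 1 + dist u p
  have key : G.dist s u + G.dist u p = G.dist s p := by
    have hle : G.dist s p ≤ G.dist s u + G.dist u p := hconn.dist_triangle
    have hge : G.dist s u + G.dist u p ≤ G.dist s p := by
      obtain ⟨w, hw⟩ := hconn.exists_walk_length_eq_dist s p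
      cases w with
      | nil => exact absurd rfl (Ne.symm hps)
      | @cons _ x _ h w' =>
        have hx : u = x := ((Set.ext_iff.mp hnbr _).mp h).symm
        subst hx
        have : G.dist u p ≤ w'.length := SimpleGraph.dist_le w'
        simp only [SimpleGraph.Walk.length_cons] at hw
        omega
    omega
  exact Or.inr (Or.inr (Or.inr ⟨hsu, Ne.symm hpu, Ne.symm hps, key⟩))
end

section
/- In the metric space induced by a connected bipartite graph, for any two adjacent vertices x and y, the line determined by x and y consists of all vertices of the graph; in particular, for every vertex u, the distances dist(u,x) and dist(u,y) differ by exactly one. -/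
private lemma zmod2_sub_of_ne {a b : ZMod 2} (h : a ≠ b) : a - b = 1 := by
  revert h; revert a b; decide

private lemma walk_parity {V : Type*} {G : SimpleGraph V} (C : G.Coloring (ZMod 2)) :
    ∀ {u v : V} (p : G.Walk u v), (p.length : ZMod 2) = C u - C v := by
  intro u v p
  induction p with
  | nil => simp
  | @cons u w v h p ih =>
      have h1 : C u - C w = 1 := zmod2_sub_of_ne (C.valid h)
      rw [SimpleGraph.Walk.length_cons]
      push_cast
      rw [ih, ← h1]
      ring

private lemma dist_parity {V : Type*} {G : SimpleGraph V} (hconn : G.Connected)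
    (C : G.Coloring (ZMod 2)) (u v : V) : ((G.dist u v : ℕ) : ZMod 2) = C u - C v := by
  obtain ⟨p, hp⟩ := hconn.exists_walk_length_eq_dist u v
  rw [← hp, walk_parity C]

/-- In a connected bipartite graph, for any two adjacent vertices `x` and `y`,
the line determined by `x` and `y` consists of all vertices of the graph; in
particular, for every vertex `u`, the distances `dist u x` and `dist u y`
differ by exactly one. -/
theorem stmt6 {V : Type*} (G : SimpleGraph V) (hconn : G.Connected)
    (hbip : G.Colorable 2) (x y : V) (hxy : G.Adj x y) :
    G.line x y = Set.univ ∧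
      ∀ u : V, G.dist u x = G.dist u y + 1 ∨ G.dist u y = G.dist u x + 1 := by
  have C : G.Coloring (ZMod 2) := hbip.toColoring (by simp)
  have hxy1 : G.dist x y = 1 := SimpleGraph.dist_eq_one_iff_adj.mpr hxy
  have hyx1 : G.dist y x = 1 := by rw [SimpleGraph.dist_comm]; exact hxy1
  have hne : x ≠ y := hxy.ne
  have key : ∀ u : V, G.dist u x = G.dist u y + 1 ∨ G.dist u y = G.dist u x + 1 := by
    intro u
    have t1 : G.dist u x ≤ G.dist u y + G.dist y x := hconn.dist_triangle
    have t2 : G.dist u y ≤ G.dist u x + G.dist x y := hconn.dist_triangle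
    have hneq : G.dist u x ≠ G.dist u y := by
      intro h
      have p1 := dist_parity hconn C u x
      have p2 := dist_parity hconn C u y
      rw [h, p2] at p1
      exact C.valid hxy (sub_right_injective p1).symm
    omega
  refine ⟨?_, key⟩
  ext u
  simp only [Set.mem_univ, iff_true]
  by_cases hux : u = x
  · exact Or.inl (Or.inl hux)
  by_cases huy : u = y
  · exact Or.inl (Or.inr huy)
  right
  rcases key u with h | h
  · -- dist u x = dist u y + 1 : Btw x y u
    refine Or.inr (Or.inr ⟨hne, fun hyu => huy hyu.symm, fun hxu => hux hxu.symm, ?_⟩)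
    have e1 : G.dist y u = G.dist u y := SimpleGraph.dist_comm
    have e2 : G.dist x u = G.dist u x := SimpleGraph.dist_comm
    rw [hxy1]
    omega
  · -- dist u y = dist u x + 1 : Btw u x y
    refine Or.inl ⟨hux, hne, huy, ?_⟩
    rw [hxy1]
    omega
end

section
/- Every metric space induced by a connected bipartite graph on n vertices, where n ≥ 2, has a line that consists of all n vertices. -/
lemma walk_parity_s7 {V : Type*} {G : SimpleGraph V} (c : G.Coloring (Fin 2))
    {a b : V} (w : G.Walk a b) : (c a = c b ↔ Even w.length) := by
  induction w with
  | nil => simp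
  | @cons x y z h w ih =>
    have hxy : c x ≠ c y := c.valid h
    have key : ∀ p q r : Fin 2, p ≠ q → (p = r ↔ ¬ q = r) := by decide
    rw [SimpleGraph.Walk.length_cons, Nat.even_add_one, ← ih, key _ _ _ hxy]

lemma dist_parity_s7 {V : Type*} {G : SimpleGraph V} (hconn : G.Connected)
    (c : G.Coloring (Fin 2)) (a b : V) : (c a = c b ↔ Even (G.dist a b)) := by
  obtain ⟨w, hw⟩ := (hconn a b).exists_walk_length_eq_dist
  rw [← hw]
  exact walk_parity_s7 c w

/-- Every metric space induced by a connected bipartite graph on `n ≥ 2` vertices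
has a line that consists of all `n` vertices. -/
theorem stmt7 {V : Type*} [Fintype V] (G : SimpleGraph V) (hconn : G.Connected)
    (hbip : G.Colorable 2) (n : ℕ) (hn : Fintype.card V = n) (h2 : 2 ≤ n) :
    ∃ u v : V, u ≠ v ∧ G.line u v = Set.univ := by
  obtain ⟨c⟩ := hbip
  -- find adjacent vertices
  have hcard : 2 ≤ Fintype.card V := hn ▸ h2
  have : Nontrivial V := Fintype.one_lt_card_iff_nontrivial.mp hcard
  obtain ⟨a, b, hab⟩ := exists_pair_ne V
  obtain ⟨w⟩ := hconn a b
  obtain ⟨u, v, huv⟩ : ∃ u v : V, G.Adj u v := by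
    cases w with
    | nil => exact absurd rfl hab
    | cons h _ => exact ⟨_, _, h⟩
  refine ⟨u, v, huv.ne, ?_⟩
  have hd1 : G.dist u v = 1 := SimpleGraph.dist_eq_one_iff_adj.mpr huv
  ext p
  simp only [Set.mem_univ, iff_true, SimpleGraph.line, Set.mem_union, Set.mem_insert_iff,
    Set.mem_singleton_iff, Set.mem_setOf_eq]
  rcases eq_or_ne p u with rfl | hpu; · left; left; rfl
  rcases eq_or_ne p v with rfl | hpv; · left; right; rfl
  right
  have t1 : G.dist p v ≤ G.dist p u + G.dist u v := hconn.dist_triangle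
  have t2 : G.dist p u ≤ G.dist p v + G.dist v u := hconn.dist_triangle
  have hvu : G.dist v u = 1 := by rwa [G.dist_comm]
  have hne : G.dist p u ≠ G.dist p v := by
    intro h
    have h1 := dist_parity_s7 hconn c p u
    have h2 := dist_parity_s7 hconn c p v
    rw [h] at h1
    have key : ∀ x y z : Fin 2, x ≠ y → ¬ (z = x ↔ z = y) := by decide
    exact key _ _ _ (c.valid huv) (h1.trans h2.symm)
  rcases lt_or_gt_of_ne hne with hlt | hgt
  · -- dist p u + 1 = dist p v : Btw p u v
    left
    exact ⟨hpu, huv.ne, hpv, by omega⟩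
  · -- dist u v + dist v p = dist u p : Btw u v p
    right; right
    refine ⟨huv.ne, Ne.symm hpv, Ne.symm hpu, ?_⟩
    have e1 : G.dist v p = G.dist p v := SimpleGraph.dist_comm
    have e2 : G.dist u p = G.dist p u := SimpleGraph.dist_comm
    omega
end
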